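/- arXiv:0810.0438 — 3 statements merged into one kernel-verified Lean document; each statement's English description precedes it below -/
import Mathlib

section
/- For nonnegative integers m, n and any x, (-1)^m * sum_{i=0}^{m} binomial(m,i) * B_{n+i}(x) = (-1)^n * sum_{j=0}^{n} binomial(n,j) * B_{m+j}(-x). -/
/-!
Write `S_f(a, b) = ∑_{i ≤ a} C(a, i) f(b + i)`. Pascal's rule gives
`S_f(a + 1, b) = S_f(a, b) + S_f(a, b + 1)`, so `(-1)^m S_f(m, n)` and `(-1)^n S_g(n, m)`, as
functions of `(m, n)`, satisfy the same recursion in `m`; hence they agree as soon as they agree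
for `m = 0`. For `f = B_·(x)` and `g = B_·(-x)` the case `m = 0` reads `B_n(x) = (-1)^n B_n(1 - x)`,
by the addition formula `∑_k C(n, k) B_k(y) = B_n(1 + y)` and the reflection formula.
-/

open Finset Polynomial

section BinomialShiftSum

variable {R : Type*}

def binomialShiftSum [Semiring R] (f : ℕ → R) (a b : ℕ) : R :=
  ∑ i ∈ range (a + 1), (a.choose i : R) * f (b + i)

@[simp]
theorem binomialShiftSum_zero [Semiring R] (f : ℕ → R) (b : ℕ) : binomialShiftSum f 0 b = f b := by
  simp [binomialShiftSum]

theorem binomialShiftSum_succ [Semiring R] (f : ℕ → R) (a b : ℕ) :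
    binomialShiftSum f (a + 1) b = binomialShiftSum f a b + binomialShiftSum f a (b + 1) := by
  have hlow : binomialShiftSum f a b =
      f b + ∑ i ∈ range (a + 1), (a.choose (i + 1) : R) * f (b + (i + 1)) := by
    rw [binomialShiftSum, sum_range_succ' _ a, sum_range_succ _ a]
    simp [add_comm]
  have hshift : binomialShiftSum f a (b + 1) =
      ∑ i ∈ range (a + 1), (a.choose i : R) * f (b + (i + 1)) := by
    simp only [binomialShiftSum, add_assoc, add_comm 1]
  rw [hlow, hshift, binomialShiftSum, sum_range_succ']
  simp only [Nat.choose_succ_succ', Nat.cast_add, add_mul, sum_add_distrib, Nat.choose_zero_right,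
    Nat.cast_one, one_mul, add_zero]
  abel

theorem neg_one_pow_mul_binomialShiftSum_comm [CommRing R] {f g : ℕ → R}
    (h : ∀ n, f n = (-1) ^ n * binomialShiftSum g n 0) (m n : ℕ) :
    (-1) ^ m * binomialShiftSum f m n = (-1) ^ n * binomialShiftSum g n m := by
  induction m generalizing n with
  | zero => simpa using h n
  | succ m ih =>
    have hg := binomialShiftSum_succ g n m
    rw [binomialShiftSum_succ]
    linear_combination -ih n - ih (n + 1) + (-1) ^ n * hg

end BinomialShiftSum

namespace Polynomial

theorem eq_of_derivative_eq_of_eval_zero_eq {R : Type*} [Ring R] [IsAddTorsionFree R] {p q : R[X]}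
    (h : derivative p = derivative q) (h0 : p.eval 0 = q.eval 0) : p = q := by
  have hconst := eq_C_of_derivative_eq_zero (p := p - q) (by rw [derivative_sub, h, sub_self])
  rw [← sub_eq_zero, hconst, coeff_zero_eq_eval_zero, eval_sub, h0, sub_self, map_zero]

theorem sum_range_choose_mul_bernoulli (n : ℕ) :
    ∑ k ∈ range (n + 1), (n.choose k : ℚ[X]) * bernoulli k = (bernoulli n).comp (1 + X) := by
  induction n with
  | zero => simp
  | succ n ih =>
    refine eq_of_derivative_eq_of_eval_zero_eq ?_ ?_
    · calc derivative (∑ k ∈ range (n + 2), ((n + 1).choose k : ℚ[X]) * bernoulli k)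
          = ∑ k ∈ range (n + 1), ((n + 1).choose (k + 1) : ℚ[X]) * ((k + 1) * bernoulli k) := by
            simp [sum_range_succ' _ (n + 1), derivative_bernoulli_add_one]
        _ = (n + 1) * ∑ k ∈ range (n + 1), (n.choose k : ℚ[X]) * bernoulli k := by
            rw [mul_sum]
            refine sum_congr rfl fun k _ => ?_
            rw [← mul_assoc, ← mul_assoc]
            congr 1
            exact_mod_cast (Nat.add_one_mul_choose_eq n k).symm
        _ = derivative ((bernoulli (n + 1)).comp (1 + X)) := by
            simp [ih, derivative_comp, derivative_bernoulli_add_one]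
    · -- `∑_{k ≤ n+1} C(n+1, k) B_k = B_{n+1} + [n = 0] = B'_{n+1} = B_{n+1}(1)`
      rw [eval_finsetSum, sum_range_succ]
      rcases eq_or_ne n 0 with rfl | hn
      · norm_num [bernoulli_eval_one, bernoulli'_one]
      · simp [bernoulli_eval_one, bernoulli_eq_bernoulli'_of_ne_one, hn]

theorem sum_range_choose_mul_bernoulli_eval (n : ℕ) (x : ℚ) :
    ∑ k ∈ range (n + 1), (n.choose k : ℚ) * (bernoulli k).eval x = (bernoulli n).eval (1 + x) := by
  simpa [eval_finsetSum] using congr_arg (eval x) (sum_range_choose_mul_bernoulli n)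

theorem bernoulli_eval_eq_neg_one_pow_mul_sum (n : ℕ) (x : ℚ) :
    (bernoulli n).eval x =
      (-1) ^ n * ∑ k ∈ range (n + 1), (n.choose k : ℚ) * (bernoulli k).eval (-x) := by
  rw [sum_range_choose_mul_bernoulli_eval, ← sub_eq_add_neg, bernoulli_eval_one_sub, ← mul_assoc,
    ← mul_pow, neg_one_mul, neg_neg, one_pow, one_mul]

end Polynomial

theorem wu_sun_pan_bernoulli_poly_reflection (m n : ℕ) (x : ℚ) :
    (-1 : ℚ) ^ m * ∑ i ∈ range (m + 1),
        (m.choose i : ℚ) * (Polynomial.bernoulli (n + i)).eval x =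
    (-1 : ℚ) ^ n * ∑ j ∈ range (n + 1),
        (n.choose j : ℚ) * (Polynomial.bernoulli (m + j)).eval (-x) :=
  neg_one_pow_mul_binomialShiftSum_comm
    (fun n => by simpa [binomialShiftSum] using bernoulli_eval_eq_neg_one_pow_mul_sum n x) m n
end

section
/- For nonnegative integers k, l and x, y, z with x + y + z = 1, (-1)^k * sum_{j=0}^{k} binomial(k,j) * x^{k-j} * B_{l+j+1}(y)/(l+j+1) + (-1)^l * sum_{j=0}^{l} binomial(l,j) * x^{l-j} * B_{k+j+1}(z)/(k+j+1) = (-x)^{k+l+1} / ((k+l+1) * binomial(k+l, k)). -/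
/-!
Write `T_a(k, m) = ∑_{j ≤ k} C(k,j) x^{k-j} a(m+j)`. Pascal's rule gives
`T_a(k+1, m) = x T_a(k, m) + T_a(k, m+1)`, and the right-hand side, which is
`(-x)^{k+l+1} B(k+1, l+1)` with `B` Euler's Beta function, obeys the matching recurrence
`B(k+2, l+1) + B(k+1, l+2) = B(k+1, l+1)`. Induction on `k` therefore reduces the identity to
`k = 0`, where it follows from the addition formula
`B_n(z + x) = ∑ C(n,i) B_i(z) x^{n-i}` (read off the generating function) and the reflection
`B_n(1 - t) = (-1)^n B_n(t)`, since `y = 1 - (z + x)`.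
-/

open Finset Nat

namespace Polynomial

open PowerSeries in
theorem bernoulli_eval_add (n : ℕ) (a b : ℚ) :
    (bernoulli n).eval (a + b) =
      ∑ i ∈ range (n + 1), (n.choose i : ℚ) * (bernoulli i).eval a * b ^ (n - i) := by
  let egf (t : ℚ) : ℚ⟦X⟧ := mk fun n => aeval t ((1 / n ! : ℚ) • bernoulli n)
  have hegf : egf (a + b) = egf a * rescale b (exp ℚ) := by
    have hne : exp ℚ - 1 ≠ 0 := fun h => by simpa using congr(PowerSeries.coeff 1 $h)
    apply mul_right_cancel₀ hne
    rw [mul_right_comm, bernoulli_generating_function, bernoulli_generating_function, mul_assoc,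
      exp_mul_exp_eq_exp_add]
  have hn := congr((n ! : ℚ) * PowerSeries.coeff n $hegf)
  rw [PowerSeries.coeff_mul, Nat.sum_antidiagonal_eq_sum_range_succ_mk, mul_sum] at hn
  simp only [egf, PowerSeries.coeff_mk, coeff_rescale, coeff_exp, map_smul, coe_aeval_eq_eval] at hn
  rw [smul_eq_mul, ← mul_assoc, mul_one_div_cancel (by positivity), one_mul] at hn
  rw [hn]
  refine sum_congr rfl fun i hi => ?_
  rw [cast_choose ℚ (mem_range_succ_iff.mp hi)]
  simp only [smul_eq_mul, Algebra.algebraMap_self, RingHom.id_apply]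
  field_simp

end Polynomial

section ShiftedBinomialSum

variable {R : Type*} [CommSemiring R]

def shiftedBinomialSum (a : ℕ → R) (x : R) (k m : ℕ) : R :=
  ∑ j ∈ range (k + 1), k.choose j * x ^ (k - j) * a (m + j)

@[simp]
theorem shiftedBinomialSum_zero (a : ℕ → R) (x : R) (m : ℕ) :
    shiftedBinomialSum a x 0 m = a m := by
  simp [shiftedBinomialSum]

theorem shiftedBinomialSum_succ (a : ℕ → R) (x : R) (k m : ℕ) :
    shiftedBinomialSum a x (k + 1) m =
      x * shiftedBinomialSum a x k m + shiftedBinomialSum a x k (m + 1) := by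
  have pascal := sum_choose_succ_mul (fun i j => x ^ j * a (m + i)) k
  simp only [shiftedBinomialSum, mul_sum, mul_assoc] at pascal ⊢
  rw [pascal]
  congr 1
  · refine sum_congr rfl fun j hj => ?_
    rw [Nat.sub_add_comm (mem_range_succ_iff.mp hj), pow_succ]
    ring
  · simp only [add_right_comm m 1, add_assoc]

end ShiftedBinomialSum

/-- `betaNat k l = B(k+1, l+1) = ∫₀¹ tᵏ (1-t)ˡ dt`. -/
def betaNat (k l : ℕ) : ℚ := k ! * l ! / (k + l + 1)!

theorem betaNat_eq_inv (k l : ℕ) : betaNat k l = ((k + l + 1 : ℚ) * (k + l).choose k)⁻¹ := by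
  rw [betaNat, cast_choose ℚ (le_add_right k l), add_tsub_cancel_left, factorial_succ]
  push_cast
  field_simp

theorem betaNat_succ_left_add_betaNat_succ_right (k l : ℕ) :
    betaNat (k + 1) l + betaNat k (l + 1) = betaNat k l := by
  rw [betaNat, betaNat, betaNat, show k + 1 + l + 1 = k + l + 1 + 1 by ring,
    show k + (l + 1) + 1 = k + l + 1 + 1 by ring, factorial_succ (k + l + 1), factorial_succ k,
    factorial_succ l]
  push_cast
  field_simp
  ring

theorem add_one_mul_shiftedBinomialSum_bernoulli (l : ℕ) (x z : ℚ) :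
    (l + 1) * shiftedBinomialSum (fun n => (Polynomial.bernoulli n).eval z / n) x l 1 =
      (Polynomial.bernoulli (l + 1)).eval (z + x) - x ^ (l + 1) := by
  rw [Polynomial.bernoulli_eval_add, sum_range_succ', shiftedBinomialSum, mul_sum]
  simp only [choose_zero_right, Polynomial.bernoulli_zero, Polynomial.eval_one, cast_one,
    one_mul, tsub_zero, add_sub_cancel_right, add_tsub_add_eq_tsub_right]
  refine sum_congr rfl fun j _ => ?_
  have hchoose : ((l + 1 : ℕ) : ℚ) * l.choose j = (l + 1).choose (j + 1) * (j + 1 : ℕ) := by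
    exact_mod_cast add_one_mul_choose_eq l j
  push_cast at hchoose ⊢
  rw [add_comm 1 j]
  field_simp
  linear_combination x ^ (l - j) * (Polynomial.bernoulli (j + 1)).eval z * hchoose

theorem shiftedBinomialSum_bernoulli_reciprocity (k l : ℕ) (x y z : ℚ) (h : x + y + z = 1) :
    (-1) ^ k * shiftedBinomialSum (fun n => (Polynomial.bernoulli n).eval y / n) x k (l + 1) +
      (-1) ^ l * shiftedBinomialSum (fun n => (Polynomial.bernoulli n).eval z / n) x l (k + 1) =
      (-x) ^ (k + l + 1) * betaNat k l := by
  induction k generalizing l with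
  | zero =>
    have hbase := add_one_mul_shiftedBinomialSum_bernoulli l x z
    have hreflect : (Polynomial.bernoulli (l + 1)).eval y =
        (-1) ^ (l + 1) * (Polynomial.bernoulli (l + 1)).eval (z + x) := by
      rw [← Polynomial.bernoulli_eval_one_sub, show y = 1 - (z + x) by linarith]
    simp only [shiftedBinomialSum_zero, betaNat, zero_add, factorial_zero, factorial_succ,
      hreflect]
    push_cast
    field_simp
    linear_combination (-1) ^ l * hbase
  | succ k ih =>
    have hz := shiftedBinomialSum_succ (fun n => (Polynomial.bernoulli n).eval z / n) x l (k + 1)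
    have hbeta := betaNat_succ_left_add_betaNat_succ_right k l
    rw [shiftedBinomialSum_succ]
    linear_combination (-x) * ih l - ih (l + 1) - (-1) ^ l * hz - (-x) ^ (k + l + 2) * hbeta

theorem sun_bernoulli_poly_div (k l : ℕ) (x y z : ℚ) (h : x + y + z = 1) :
    (-1 : ℚ) ^ k * ∑ j ∈ range (k + 1),
        (k.choose j : ℚ) * x ^ (k - j) * (Polynomial.bernoulli (l + j + 1)).eval y / (l + j + 1)
      + (-1 : ℚ) ^ l * ∑ j ∈ range (l + 1),
        (l.choose j : ℚ) * x ^ (l - j) * (Polynomial.bernoulli (k + j + 1)).eval z / (k + j + 1)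
    = (-x) ^ (k + l + 1) / ((k + l + 1) * ((k + l).choose k : ℚ)) := by
  have hsum (k l : ℕ) (w : ℚ) :
      ∑ j ∈ range (k + 1),
        (k.choose j : ℚ) * x ^ (k - j) * (Polynomial.bernoulli (l + j + 1)).eval w / (l + j + 1) =
      shiftedBinomialSum (fun n => (Polynomial.bernoulli n).eval w / n) x k (l + 1) := by
    refine sum_congr rfl fun j _ => ?_
    rw [add_right_comm]
    push_cast
    ring
  rw [hsum, hsum, div_eq_mul_inv, ← betaNat_eq_inv]
  exact shiftedBinomialSum_bernoulli_reciprocity k l x y z h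
end

section
/- For nonnegative integers m, n and any x, (-1)^m * sum_{k=0}^{m} binomial(m+1,k) * (n+k+1) * E_{n+k}(x) + (-1)^n * sum_{k=0}^{n} binomial(n+1,k) * (m+k+1) * E_{m+k}(-x) = (-1)^m * 2 * (n+m+2) * (x^{n+m+1} - E_{n+m+1}(x)). -/
open Finset

/-- The Euler polynomials `E n`, defined by the recurrence
`E n = X^n - (1/2) * ∑_{k<n} (n choose k) E k`, equivalent to the
generating function `2 e^{xt}/(e^t+1) = ∑ E_n(x) t^n/n!`. -/
noncomputable def eulerPoly : ℕ → Polynomial ℚ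
  | n => Polynomial.X ^ n - Polynomial.C (1/2 : ℚ) *
      ∑ k : Fin n, Polynomial.C ((n.choose k : ℚ)) * eulerPoly k

/-!
The Euler polynomials are characterised by `E_n(x+1) + E_n(x) = 2xⁿ`, because `p(x+1) + p(x)`
determines `p` (its leading coefficient is twice that of `p`). This characterisation yields
`E_{n+1}' = (n+1) E_n` and the reflection `E_n(-x) = (-1)ⁿ (2xⁿ - E_n(x))`.
By Pascal's rule, `S(M,N) = (-1)^M ∑_k C(M,k) E_{N+k}(x)` and `T(M,N) = S(N,M)(-x)` both satisfy
`F(M+1,N) = -F(M,N) - F(M,N+1)`, and by reflection they agree at `M = 0`, so `S = T`.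
Differentiating `S(m+1,n+1) = T(m+1,n+1)` and splitting off the top terms gives the theorem.
-/

open Polynomial

theorem Polynomial.eq_of_taylor_add_self_eq {R : Type*} [Ring R] [IsAddTorsionFree R] (r : R)
    {p q : R[X]} (h : taylor r p + p = taylor r q + q) : p = q := by
  have hd : taylor r (p - q) + (p - q) = 0 := by
    rw [map_sub, sub_add_sub_comm, h, sub_self]
  rw [← sub_eq_zero, ← leadingCoeff_eq_zero, ← two_nsmul_eq_zero, two_nsmul]
  simpa only [coeff_add, coeff_taylor_natDegree, coeff_natDegree, coeff_zero]
    using congrArg (coeff · (p - q).natDegree) hd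

theorem two_mul_eulerPoly (n : ℕ) :
    2 * eulerPoly n = 2 * X ^ n - ∑ k ∈ range n, (n.choose k : ℚ[X]) * eulerPoly k := by
  have h2 : (2 : ℚ[X]) * C (1 / 2) = 1 := by
    rw [← C_ofNat, ← C_mul]; norm_num
  rw [eulerPoly, Fin.sum_univ_eq_sum_range (fun k => C (n.choose k : ℚ) * eulerPoly k)]
  simp only [map_natCast]
  linear_combination -(∑ k ∈ range n, (n.choose k : ℚ[X]) * eulerPoly k) * h2

theorem taylor_one_eulerPoly_add_eulerPoly (n : ℕ) :
    taylor 1 (eulerPoly n) + eulerPoly n = 2 * X ^ n := by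
  induction n using Nat.strong_induction_on with
  | _ n ih =>
  have hshift : ∑ k ∈ range n, (n.choose k : ℚ[X]) * taylor 1 (eulerPoly k)
      = 2 * ∑ k ∈ range n, (n.choose k : ℚ[X]) * X ^ k
        - ∑ k ∈ range n, (n.choose k : ℚ[X]) * eulerPoly k := by
    rw [mul_sum, ← sum_sub_distrib]
    refine sum_congr rfl fun k hk => ?_
    linear_combination (n.choose k : ℚ[X]) * ih k (mem_range.mp hk)
  have hbinom : (X + 1 : ℚ[X]) ^ n = ∑ k ∈ range n, (n.choose k : ℚ[X]) * X ^ k + X ^ n := by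
    rw [add_pow, sum_range_succ, Nat.choose_self]
    simp only [one_pow, mul_one, Nat.cast_one, Nat.sub_self, pow_zero]
    exact congrArg (· + _) (sum_congr rfl fun k _ => mul_comm _ _)
  have htaylor := congrArg (taylorAlgHom (1 : ℚ)) (two_mul_eulerPoly n)
  simp only [map_sub, map_mul, map_sum, map_ofNat, map_natCast, map_pow] at htaylor
  simp only [taylorAlgHom_apply, taylor_X, map_one] at htaylor
  apply mul_left_cancel₀ (two_ne_zero : (2 : ℚ[X]) ≠ 0)
  linear_combination htaylor - hshift + two_mul_eulerPoly n + 2 * hbinom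

theorem derivative_eulerPoly_succ (n : ℕ) :
    derivative (eulerPoly (n + 1)) = C (n + 1 : ℚ) * eulerPoly n := by
  refine eq_of_taylor_add_self_eq 1 ?_
  have hd := congrArg derivative (taylor_one_eulerPoly_add_eulerPoly (n + 1))
  rw [derivative_add, taylor_apply, derivative_comp, ← taylor_apply] at hd
  simp only [derivative_add, derivative_X, derivative_C, add_zero, one_mul] at hd
  rw [taylor_mul, taylor_C, ← mul_add, taylor_one_eulerPoly_add_eulerPoly, hd, derivative_mul]
  simp only [derivative_ofNat, zero_mul, zero_add, derivative_X_pow, add_tsub_cancel_right]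
  push_cast
  ring

theorem eulerPoly_comp_neg_X (n : ℕ) :
    (eulerPoly n).comp (-X) = (-1) ^ n * (2 * X ^ n - eulerPoly n) := by
  refine eq_of_taylor_add_self_eq 1 (funext fun x => ?_)
  have h₁ := congrArg (eval x) (taylor_one_eulerPoly_add_eulerPoly n)
  have h₂ := congrArg (eval (-x - 1)) (taylor_one_eulerPoly_add_eulerPoly n)
  simp only [eval_add, taylor_eval, eval_mul, eval_pow, eval_X, eval_ofNat] at h₁ h₂
  simp only [eval_add, taylor_eval, eval_comp, eval_mul, eval_pow, eval_neg, eval_X, eval_sub,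
    eval_one, eval_ofNat]
  rw [show -x - 1 + 1 = -x by ring] at h₂
  rw [show -(x + 1) = -x - 1 by ring]
  rw [show (-x - 1) ^ n = (-1) ^ n * (x + 1) ^ n by rw [← mul_pow]; ring] at h₂
  linear_combination h₂ + (-1) ^ n * h₁

noncomputable def eulerChooseSum (M N : ℕ) : ℚ[X] :=
  (-1) ^ M * ∑ k ∈ range (M + 1), (M.choose k : ℚ[X]) * eulerPoly (N + k)

theorem eulerChooseSum_succ_left (M N : ℕ) :
    eulerChooseSum (M + 1) N = -(eulerChooseSum M N + eulerChooseSum M (N + 1)) := by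
  simp only [eulerChooseSum, Finset.sum_choose_succ_mul (fun i _ => eulerPoly (N + i)) M,
    Nat.add_right_comm N 1, ← add_assoc]
  ring

theorem eulerChooseSum_zero_left (N : ℕ) : eulerChooseSum 0 N = eulerPoly N := by
  simp [eulerChooseSum]

theorem eulerChooseSum_zero_right (N : ℕ) : eulerChooseSum N 0 = (eulerPoly N).comp (-X) := by
  rw [eulerChooseSum, eulerPoly_comp_neg_X, sum_range_succ, Nat.choose_self]
  simp only [zero_add, Nat.cast_one, one_mul]
  linear_combination (-1 : ℚ[X]) ^ N * two_mul_eulerPoly N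

theorem eulerChooseSum_eq_comp_neg_X (M N : ℕ) :
    eulerChooseSum M N = (eulerChooseSum N M).comp (-X) := by
  induction M generalizing N with
  | zero => rw [eulerChooseSum_zero_left, eulerChooseSum_zero_right, comp_neg_X_comp_neg_X]
  | succ M ih =>
    rw [eulerChooseSum_succ_left, ih, ih, ← add_comp, ← neg_comp]
    congr 1
    linear_combination -eulerChooseSum_succ_left N M

theorem eval_derivative_eulerChooseSum (M N : ℕ) (x : ℚ) :
    (derivative (eulerChooseSum M (N + 1))).eval x = (-1) ^ M *
      ∑ k ∈ range (M + 1), (M.choose k : ℚ) * (N + k + 1) * (eulerPoly (N + k)).eval x := by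
  simp only [eulerChooseSum, derivative_mul, derivative_pow, derivative_neg, derivative_one,
    neg_zero, mul_zero, zero_mul, zero_add, derivative_sum, derivative_natCast,
    Nat.add_right_comm N 1, derivative_eulerPoly_succ, eval_mul, eval_pow, eval_neg, eval_one,
    eval_finsetSum, eval_natCast, eval_C]
  congr 1
  exact sum_congr rfl fun k _ => by push_cast; ring

theorem wu_sun_pan_euler_poly_deriv (m n : ℕ) (x : ℚ) :
    (-1 : ℚ) ^ m * ∑ k ∈ range (m + 1),
        ((m + 1).choose k : ℚ) * (n + k + 1) * (eulerPoly (n + k)).eval x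
      + (-1 : ℚ) ^ n * ∑ k ∈ range (n + 1),
        ((n + 1).choose k : ℚ) * (m + k + 1) * (eulerPoly (m + k)).eval (-x)
    = (-1 : ℚ) ^ m * 2 * (n + m + 2) * (x ^ (n + m + 1) - (eulerPoly (n + m + 1)).eval x) := by
  have hsym := congrArg (fun p => (derivative p).eval x)
    (eulerChooseSum_eq_comp_neg_X (m + 1) (n + 1))
  simp only [derivative_comp, derivative_neg, derivative_X, eval_mul, eval_neg, eval_one,
    eval_comp, eval_X, eval_derivative_eulerChooseSum, sum_range_succ _ (m + 1),
    sum_range_succ _ (n + 1), Nat.choose_self] at hsym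
  rw [show n + (m + 1) = n + m + 1 by ring, show m + (n + 1) = n + m + 1 by ring] at hsym
  push_cast at hsym
  have hrefl := congrArg (eval x) (eulerPoly_comp_neg_X (n + m + 1))
  simp only [eval_comp, eval_neg, eval_X, eval_mul, eval_pow, eval_one, eval_sub,
    eval_ofNat] at hrefl
  have hsq : ((-1 : ℚ) ^ n) * (-1) ^ n = 1 := by rw [← mul_pow]; norm_num
  linear_combination -hsym - (-1 : ℚ) ^ n * (n + m + 2) * hrefl
    + (-1 : ℚ) ^ m * (n + m + 2) * (2 * x ^ (n + m + 1) - (eulerPoly (n + m + 1)).eval x) * hsq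
end
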